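/- arXiv:2007.11526 — 6 statements merged into one kernel-verified Lean document; each statement's English description precedes it below -/
import Mathlib

section
/- For finite nonempty sets U, V in an abelian group G, |U+V| ≤ |U-V|³ / (|U|·|V|). -/
open Finset Pointwise

theorem stmt_0 {G : Type*} [AddCommGroup G] [DecidableEq G]
    (U V : Finset G) (hU : U.Nonempty) (hV : V.Nonempty) :
    ((U + V).card : ℝ) ≤ ((U - V).card : ℝ) ^ 3 / (U.card * V.card) := by
  have h1 : #(U + V) * #U ≤ #(U - U) * #(V - U) := by
    have := ruzsa_triangle_inequality_add_add_add U (-U) V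
    simpa [← sub_eq_add_neg, neg_add_eq_sub] using this
  have h2 : #(U - U) * #V ≤ #(U - V) * #(U - V) :=
    ruzsa_triangle_inequality_sub_sub_sub U V U
  have h3 : #(V - U) = #(U - V) := by
    rw [show V - U = -(U - V) by ext x; simp [Finset.mem_sub, Finset.mem_neg]]
    exact Finset.card_neg _
  have key : #(U + V) * #U * #V ≤ #(U - V) ^ 3 := by
    calc #(U + V) * #U * #V ≤ #(U - U) * #(V - U) * #V := by
          exact Nat.mul_le_mul_right _ h1
      _ = (#(U - U) * #V) * #(V - U) := by ring
      _ ≤ (#(U - V) * #(U - V)) * #(V - U) := Nat.mul_le_mul_right _ h2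
      _ = #(U - V) ^ 3 := by rw [h3]; ring
  rw [le_div_iff₀ (by positivity)]
  rw [← mul_assoc]; exact_mod_cast key
end

section
/- Let A ⊆ ℝ^d be finite and nonempty with dim(A) = d, and suppose A ⊆ l₁ ∪ ⋯ ∪ l_d where l₁,…,l_d are d parallel lines in ℝ^d with A ∩ l_i nonempty for each i. Then |A-A| ≥ 2(d-1)|A| - d². -/
/-!
Collapse the common direction `v` of the lines: under `π : ℝᵈ → ℝᵈ ⧸ ℝ ∙ v` the line `lᵢ`
becomes a single point `qᵢ`. Since `A` spans `ℝᵈ` and lies on the lines, the `d` points `qᵢ` span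
the `(d - 1)`-dimensional quotient, so they are affinely independent. A difference `x - y` with
`x ∈ Aᵢ := A ∩ lᵢ`, `y ∈ Aⱼ` maps to `qᵢ - qⱼ`, and affine independence makes these values distinct
for distinct ordered pairs `i ≠ j`; hence the sets `Aᵢ - Aⱼ` are disjoint inside `A - A`.
Cauchy–Davenport in the torsion-free group `ℝᵈ` gives `|Aᵢ - Aⱼ| ≥ |Aᵢ| + |Aⱼ| - 1`, and summing
over the `d (d - 1)` ordered pairs yields `|A - A| ≥ 2 (d - 1) |A| - d (d - 1)`.
-/

open Finset Pointwise

section AffineIndependent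

variable {k V ι : Type*} [Field k] [AddCommGroup V] [Module k V]

theorem AffineIndependent.eq_and_eq_of_sub_eq_sub [CharZero k] {p : ι → V}
    (hp : AffineIndependent k p) {i j i' j' : ι} (hij : i ≠ j)
    (h : p i - p j = p i' - p j') : i = i' ∧ j = j' := by
  classical
  set s : Finset ι := {i, j, i', j'}
  have hw := hp.eq_of_sum_eq_sum (s := s) (w₁ := Pi.single i 1 + Pi.single j' 1)
    (w₂ := Pi.single i' 1 + Pi.single j 1) (by simp [s, sum_add_distrib])
    (by simpa [s, add_smul, sum_add_distrib, Pi.single_apply] using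
      sub_eq_sub_iff_add_eq_add.1 h)
  have hi := hw i (by simp [s])
  have hii' : i = i' := by
    by_contra hne
    rcases eq_or_ne i j' with rfl | hij'
    · norm_num [Pi.single_apply, hij, hne] at hi
    · norm_num [Pi.single_apply, hij, hne, hij'] at hi
  subst hii'
  exact ⟨rfl, hp.injective (sub_right_injective h)⟩

theorem AffineIndependent.pairwiseDisjoint_sub [CharZero k] {G : Type*} [AddCommGroup G]
    [DecidableEq G] (f : G →+ V) {q : ι → V} (hq : AffineIndependent k q) {B : ι → Finset G}
    (hB : ∀ i, ∀ x ∈ B i, f x = q i) :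
    (Set.univ : Set ι).offDiag.PairwiseDisjoint fun ij => B ij.1 - B ij.2 := by
  rintro ⟨i, j⟩ ⟨-, -, hij⟩ ⟨i', j'⟩ - hne
  refine disjoint_left.2 fun x hx hx' => hne ?_
  obtain ⟨a, ha, b, hb, rfl⟩ := mem_sub.1 hx
  obtain ⟨a', ha', b', hb', he⟩ := mem_sub.1 hx'
  have hdiff : q i - q j = q i' - q j' := by
    rw [← hB _ _ ha, ← hB _ _ hb, ← hB _ _ ha', ← hB _ _ hb', ← map_sub, ← map_sub, he]
  obtain ⟨rfl, rfl⟩ := hq.eq_and_eq_of_sub_eq_sub hij hdiff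
  rfl

theorem affineIndependent_of_vectorSpan_eq_top [FiniteDimensional k V] [Fintype ι] {p : ι → V}
    (hp : vectorSpan k (Set.range p) = ⊤) (hcard : Fintype.card ι = Module.finrank k V + 1) :
    AffineIndependent k p :=
  (affineIndependent_iff_le_finrank_vectorSpan k p hcard).2 (by rw [hp, finrank_top])

theorem Submodule.mkQ_span_singleton_eq_iff {v x y : V} :
    (k ∙ v).mkQ x = (k ∙ v).mkQ y ↔ ∃ t : k, x = y + t • v := by
  rw [mkQ_apply, mkQ_apply, Quotient.eq, mem_span_singleton]
  exact exists_congr fun t => by rw [eq_comm, sub_eq_iff_eq_add']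

theorem affineIndependent_mkQ_comp [FiniteDimensional k V] [Fintype ι] {v : V} {p : ι → V}
    {A : Set V} (hv : v ≠ 0) (hcard : Fintype.card ι = Module.finrank k V)
    (hA : vectorSpan k A = ⊤) (hAp : ∀ x ∈ A, ∃ i, (k ∙ v).mkQ x = (k ∙ v).mkQ (p i)) :
    AffineIndependent k ((k ∙ v).mkQ ∘ p) := by
  refine affineIndependent_of_vectorSpan_eq_top ?_ ?_
  · have hsub : vectorSpan k ((k ∙ v).mkQ '' A) ≤ vectorSpan k (Set.range ((k ∙ v).mkQ ∘ p)) :=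
      vectorSpan_mono k <| by
        rintro _ ⟨x, hx, rfl⟩
        obtain ⟨i, hi⟩ := hAp x hx
        exact ⟨i, hi.symm⟩
    have himage := (k ∙ v).mkQ.toAffineMap.map_vectorSpan (s := A)
    rw [hA, LinearMap.toAffineMap_linear, Submodule.map_top, Submodule.range_mkQ,
      LinearMap.coe_toAffineMap] at himage
    rwa [← himage, top_le_iff] at hsub
  · rw [hcard, ← (k ∙ v).finrank_quotient_add_finrank, finrank_span_singleton hv]

end AffineIndependent

namespace Finset

theorem sum_offDiag_add {ι M : Type*} [Fintype ι] [DecidableEq ι] [AddCommMonoid M]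
    (f : ι → M) :
    ∑ q ∈ univ.offDiag, (f q.1 + f q.2) = (2 * (Fintype.card ι - 1)) • ∑ i, f i := by
  have hfst : ∑ q ∈ (univ : Finset ι).offDiag, f q.1 = (Fintype.card ι - 1) • ∑ i, f i := by
    rw [sum_finset_product _ univ (fun i => univ.erase i) (by simp [eq_comm]), smul_sum]
    refine sum_congr rfl fun i _ => ?_
    simp only [sum_const, card_erase_of_mem (mem_univ i), card_univ]
  have hsnd : ∑ q ∈ (univ : Finset ι).offDiag, f q.2 = ∑ q ∈ (univ : Finset ι).offDiag, f q.1 :=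
    sum_equiv (Equiv.prodComm ι ι) (by simp [eq_comm]) (by simp)
  rw [sum_add_distrib, hsnd, hfst, ← add_nsmul, two_mul]

theorem sum_card_filter_eq_card {α β ι : Type*} [Fintype ι] [DecidableEq β] {f : α → β}
    {q : ι → β} (hq : Function.Injective q) {A : Finset α} (hA : ∀ x ∈ A, ∃ i, f x = q i) :
    ∑ i, #{x ∈ A | f x = q i} = #A := by
  rw [card_eq_sum_card_fiberwise (t := univ.map ⟨q, hq⟩), sum_map]
  · rfl
  · intro x hx
    obtain ⟨i, hi⟩ := hA x hx
    simp [hi]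

variable {G : Type*} [AddGroup G] [IsAddTorsionFree G] [DecidableEq G]

theorem card_add_card_le_card_sub_add_one {s t : Finset G} (hs : s.Nonempty) (ht : t.Nonempty) :
    #s + #t ≤ #(s - t) + 1 := by
  have hcd := cauchy_davenport_of_isAddTorsionFree hs ht.neg
  rw [card_neg, ← sub_eq_add_neg] at hcd
  have := hs.card_pos
  omega

theorem sum_card_le_card_sub_of_pairwiseDisjoint_sub {ι : Type*} [Fintype ι] [DecidableEq ι]
    {A : Finset G} {B : ι → Finset G} (hBA : ∀ i, B i ⊆ A) (hB : ∀ i, (B i).Nonempty)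
    (hdisj : (Set.univ : Set ι).offDiag.PairwiseDisjoint fun q => B q.1 - B q.2) :
    2 * (Fintype.card ι - 1) * ∑ i, #(B i) ≤ #(A - A) + Fintype.card ι * (Fintype.card ι - 1) :=
  calc 2 * (Fintype.card ι - 1) * ∑ i, #(B i)
      = ∑ q ∈ univ.offDiag, (#(B q.1) + #(B q.2)) := (sum_offDiag_add fun i => #(B i)).symm
    _ ≤ ∑ q ∈ univ.offDiag, (#(B q.1 - B q.2) + 1) :=
      sum_le_sum fun q _ => card_add_card_le_card_sub_add_one (hB _) (hB _)
    _ = #(univ.offDiag.biUnion fun q => B q.1 - B q.2) +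
          Fintype.card ι * (Fintype.card ι - 1) := by
      rw [sum_add_distrib, card_biUnion (by rwa [coe_offDiag, coe_univ]), sum_const,
        smul_eq_mul, mul_one, offDiag_card, card_univ, Nat.mul_sub_one]
    _ ≤ #(A - A) + Fintype.card ι * (Fintype.card ι - 1) := by
      gcongr
      exact biUnion_subset.2 fun q _ => sub_subset_sub (hBA _) (hBA _)

end Finset

theorem stmt_3_general {d : ℕ} (hd : 1 ≤ d) (v : Fin d → ℝ) (hv : v ≠ 0)
    (p : Fin d → (Fin d → ℝ))
    (l : Fin d → Set (Fin d → ℝ))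
    (hl : ∀ i, l i = {x | ∃ t : ℝ, x = p i + t • v})
    (A : Finset (Fin d → ℝ))
    (hdim : Module.finrank ℝ (affineSpan ℝ (A : Set (Fin d → ℝ))).direction = d)
    (hcover : (A : Set (Fin d → ℝ)) ⊆ ⋃ i, l i)
    (hmeet : ∀ i, ((A : Set (Fin d → ℝ)) ∩ l i).Nonempty) :
    ((A - A).card : ℤ) ≥ 2 * (d - 1 : ℤ) * A.card - d ^ 2 := by
  classical
  set π := (ℝ ∙ v).mkQ
  have hl_fibre : ∀ i, l i = {x | π x = π (p i)} := by
    simp only [hl, π, Submodule.mkQ_span_singleton_eq_iff, implies_true]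
  simp only [hl_fibre, Set.subset_def, Set.mem_iUnion, Set.mem_ofPred_eq] at hcover
  have hspan : vectorSpan ℝ (A : Set (Fin d → ℝ)) = ⊤ :=
    Submodule.eq_top_of_finrank_eq (by rw [← direction_affineSpan, hdim, Module.finrank_fin_fun])
  have hind : AffineIndependent ℝ (π ∘ p) := affineIndependent_mkQ_comp hv
    (by rw [Fintype.card_fin, Module.finrank_fin_fun]) hspan hcover
  set B : Fin d → Finset (Fin d → ℝ) := fun i => {x ∈ A | π x = π (p i)}
  have hB : ∀ i, (B i).Nonempty := fun i => by
    obtain ⟨x, hxA, hxl⟩ := hmeet i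
    exact ⟨x, mem_filter.2 ⟨hxA, by rwa [hl_fibre] at hxl⟩⟩
  have hsum : ∑ i, #(B i) = #A := sum_card_filter_eq_card hind.injective hcover
  have key := sum_card_le_card_sub_of_pairwiseDisjoint_sub (A := A) (fun i => filter_subset _ _)
    hB (hind.pairwiseDisjoint_sub (B := B) π.toAddMonoidHom fun i x hx => (mem_filter.1 hx).2)
  rw [hsum, Fintype.card_fin] at key
  zify [hd] at key
  linarith

theorem stmt_3 {d : ℕ} (hd : 1 ≤ d) (v : Fin d → ℝ) (hv : v ≠ 0)
    (p : Fin d → (Fin d → ℝ))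
    (l : Fin d → Set (Fin d → ℝ))
    (hl : ∀ i, l i = {x | ∃ t : ℝ, x = p i + t • v})
    (A : Finset (Fin d → ℝ)) (hA : A.Nonempty)
    (hdim : Module.finrank ℝ (affineSpan ℝ (A : Set (Fin d → ℝ))).direction = d)
    (hcover : (A : Set (Fin d → ℝ)) ⊆ ⋃ i, l i)
    (hmeet : ∀ i, ((A : Set (Fin d → ℝ)) ∩ l i).Nonempty) :
    ((A - A).card : ℤ) ≥ 2 * (d - 1 : ℤ) * A.card - d ^ 2 :=
  stmt_3_general hd v hv p l hl A hdim hcover hmeet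
end

section
/- Let d ≥ 4 and m ≥ 2 be natural numbers, let R be a linear subspace of ℝ^d with 1 ≤ dim R ≤ d-1, and let Z ⊆ ℝ^d be a finite nonempty set contained in m distinct cosets of R. Let ψ : ℝ^d → ℝ^d/R be the quotient map, let U = ψ(Z), and suppose the affine dimension u of U satisfies u+1 ≤ m ≤ 2u. Then |(Z-Z) \ R| ≥ 2(2u+1-m)|Z| - 16(u² + m²). -/
/-!
Let `U = ψ(Z)` and let `Zₐ` be the fibre of `Z` over `a ∈ U`. Call `b` a unique partner of `a`
if `a - b ≠ 0` has a single representation as a difference of two elements of `U`. For such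
ordered pairs the sets `Zₐ - Z_b` lie in `(Z - Z) \ R`, are pairwise disjoint, and by
Cauchy–Davenport have at least `|Zₐ| + |Z_b| - 1` elements each.

The core is that every `t ∈ U` has at least `2u + 1 - m` unique partners, i.e. at most
`2(m - 1 - u)` ambiguous ones. Removing an ambiguous partner `p` of `t` does not shrink the affine
span, since `t - p = c - e` expresses `p` through other points. A double count of which ambiguous
partners `p` "forces" (every other representation of `t - x` uses `p`) yields a `p` forcing at
most one `x`; removing it loses at most two ambiguous partners, and induction on `|U|` concludes.
Summing over the pairs gives `|(Z - Z) \ R| ≥ 2(2u + 1 - m)|Z| - m²`.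
-/

open Finset Pointwise

section UniqueSub

open scoped Classical

variable {G : Type*} [AddCommGroup G]

def UniqueSub (U : Finset G) (a b : G) : Prop :=
  ∀ c ∈ U, ∀ e ∈ U, c - e = a - b → c = a ∧ e = b

/-- `(c, e)` represents `a - b` as a difference in `U` other than `(a, b)`: under `c - e = a - b`,
`c ≠ a` is the same as `(c, e) ≠ (a, b)`. -/
def IsOtherSubRep (U : Finset G) (a b c e : G) : Prop :=
  c ∈ U ∧ e ∈ U ∧ c - e = a - b ∧ c ≠ a

noncomputable def uniquePartners (U : Finset G) (t : G) : Finset G :=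
  {x ∈ U.erase t | UniqueSub U t x}

noncomputable def ambiguousPartners (U : Finset G) (t : G) : Finset G :=
  {x ∈ U.erase t | ¬UniqueSub U t x}

def Forces (U : Finset G) (t p x : G) : Prop :=
  p ≠ x ∧ ∀ c e, IsOtherSubRep U t x c e → p = c ∨ p = e

variable {U : Finset G} {t x c e p : G}

lemma not_uniqueSub_iff : ¬UniqueSub U t x ↔ ∃ c e, IsOtherSubRep U t x c e := by
  simp only [UniqueSub, IsOtherSubRep, not_forall]
  constructor
  · rintro ⟨c, hc, e, he, heq, hne⟩
    exact ⟨c, e, hc, he, heq, fun hct => hne ⟨hct, sub_right_injective (hct ▸ heq)⟩⟩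
  · rintro ⟨c, e, hc, he, heq, hct⟩
    exact ⟨c, hc, e, he, heq, fun h => hct h.1⟩

lemma uniqueSub_comm (h : UniqueSub U t x) : UniqueSub U x t := by
  intro c hc e he heq
  have := h e he c hc (by rw [← neg_sub, heq, neg_sub])
  exact ⟨this.2, this.1⟩

lemma mem_ambiguousPartners :
    x ∈ ambiguousPartners U t ↔ x ∈ U ∧ x ≠ t ∧ ∃ c e, IsOtherSubRep U t x c e := by
  rw [ambiguousPartners, mem_filter, mem_erase, not_uniqueSub_iff]
  tauto

lemma mem_uniquePartners : x ∈ uniquePartners U t ↔ x ∈ U ∧ x ≠ t ∧ UniqueSub U t x := by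
  rw [uniquePartners, mem_filter, mem_erase]
  tauto

lemma uniquePartners_subset : uniquePartners U t ⊆ U := fun _ hx => (mem_uniquePartners.1 hx).1

lemma mem_uniquePartners_comm (ht : t ∈ U) (hx : x ∈ uniquePartners U t) :
    t ∈ uniquePartners U x := by
  obtain ⟨-, hxt, hu⟩ := mem_uniquePartners.1 hx
  exact mem_uniquePartners.2 ⟨ht, Ne.symm hxt, uniqueSub_comm hu⟩

lemma sum_sum_uniquePartners_eq (f : G → ℕ) :
    ∑ t ∈ U, ∑ x ∈ uniquePartners U t, f x = ∑ t ∈ U, #(uniquePartners U t) * f t := by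
  rw [sum_comm' (t' := U) (s' := uniquePartners U) fun t x => ⟨fun ⟨ht, hx⟩ =>
    ⟨mem_uniquePartners_comm ht hx, uniquePartners_subset hx⟩, fun ⟨hx, ht⟩ =>
    ⟨uniquePartners_subset hx, mem_uniquePartners_comm ht hx⟩⟩]
  simp only [sum_const, smul_eq_mul]

namespace IsOtherSubRep

lemma right_ne (h : IsOtherSubRep U t x c e) : e ≠ x := by
  rintro rfl
  exact h.2.2.2 (sub_left_injective h.2.2.1)

lemma left_ne_right (h : IsOtherSubRep U t x c e) (hxt : x ≠ t) : c ≠ e := by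
  rintro rfl
  exact hxt (sub_eq_zero.1 (h.2.2.1.symm.trans (sub_self c))).symm

lemma swap (h : IsOtherSubRep U t x c e) (hx : x ∈ U) (hxt : x ≠ t) :
    IsOtherSubRep U t c x e :=
  ⟨hx, h.2.1, by
    rw [sub_eq_sub_iff_add_eq_add, add_comm]; exact sub_eq_sub_iff_add_eq_add.1 h.2.2.1, hxt⟩

lemma left_mem_ambiguousPartners (h : IsOtherSubRep U t x c e) (hx : x ∈ ambiguousPartners U t) :
    c ∈ ambiguousPartners U t := by
  obtain ⟨hxU, hxt, -⟩ := mem_ambiguousPartners.1 hx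
  exact mem_ambiguousPartners.2 ⟨h.1, h.2.2.2, x, e, h.swap hxU hxt⟩

end IsOtherSubRep

lemma bipartiteBelow_forces_subset (h : IsOtherSubRep U t x c e) :
    (ambiguousPartners U t).bipartiteBelow (Forces U t) x ⊆ {c, e} := by
  intro p hp
  simpa only [mem_insert, mem_singleton] using ((mem_bipartiteBelow _).1 hp).2.2 c e h

lemma card_bipartiteBelow_forces_le_two (hx : x ∈ ambiguousPartners U t) :
    #((ambiguousPartners U t).bipartiteBelow (Forces U t) x) ≤ 2 := by
  obtain ⟨-, -, c, e, h⟩ := mem_ambiguousPartners.1 hx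
  exact (card_le_card (bipartiteBelow_forces_subset h)).trans card_le_two

lemma IsOtherSubRep.unique_of_card_bipartiteBelow_forces_eq_two [IsAddTorsionFree G]
    (h : IsOtherSubRep U t x c e) (hx : x ∈ ambiguousPartners U t)
    (hcard : #((ambiguousPartners U t).bipartiteBelow (Forces U t) x) = 2) :
    c ≠ x ∧ e ∈ ambiguousPartners U t ∧
      ∀ c' e', IsOtherSubRep U t x c' e' → c' = c ∧ e' = e := by
  have hce := h.left_ne_right (mem_ambiguousPartners.1 hx).2.1
  have hbelow : (ambiguousPartners U t).bipartiteBelow (Forces U t) x = {c, e} :=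
    eq_of_subset_of_card_le (bipartiteBelow_forces_subset h) (by rw [hcard, card_pair hce])
  have hc : c ∈ (ambiguousPartners U t).bipartiteBelow (Forces U t) x := by simp [hbelow]
  have he : e ∈ (ambiguousPartners U t).bipartiteBelow (Forces U t) x := by simp [hbelow]
  refine ⟨((mem_bipartiteBelow _).1 hc).2.1, ((mem_bipartiteBelow _).1 he).1, fun c' e' h' => ?_⟩
  have hc' := bipartiteBelow_forces_subset h' hc
  have he' := bipartiteBelow_forces_subset h' he
  simp only [mem_insert, mem_singleton] at hc' he'
  rcases hc' with rfl | rfl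
  · exact ⟨rfl, sub_right_injective (h'.2.2.1.trans h.2.2.1.symm)⟩
  rcases he' with rfl | rfl
  · -- `c - e = e - c` forces `c = e` in the absence of 2-torsion
    have h2 : (2 : ℕ) • (c - e) = 0 := by
      rw [two_nsmul]
      nth_rewrite 2 [h.2.2.1.trans h'.2.2.1.symm]
      rw [sub_add_sub_cancel, sub_self]
    exact absurd (sub_eq_zero.1 ((smul_eq_zero.1 h2).resolve_left two_ne_zero)) hce
  · exact absurd rfl hce

lemma exists_two_lt_card_bipartiteAbove_forces (hB : (ambiguousPartners U t).Nonempty)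
    (huniq : ∀ x ∈ ambiguousPartners U t, ∀ c e, IsOtherSubRep U t x c e →
      c ≠ x ∧ e ∈ ambiguousPartners U t ∧
        ∀ c' e', IsOtherSubRep U t x c' e' → c' = c ∧ e' = e) :
    ∃ p ∈ ambiguousPartners U t,
      2 < #((ambiguousPartners U t).bipartiteAbove (Forces U t) p) := by
  have forces : ∀ x ∈ ambiguousPartners U t, ∀ c e, IsOtherSubRep U t x c e →
      Forces U t c x ∧ Forces U t e x := by
    intro x hx c e h
    obtain ⟨hcx, -, hu⟩ := huniq x hx c e h
    exact ⟨⟨hcx, fun c' e' h' => Or.inl (hu c' e' h').1.symm⟩,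
      ⟨h.right_ne, fun c' e' h' => Or.inr (hu c' e' h').2.symm⟩⟩
  -- With `t - x = c - e` and `t - e = c₁ - e₁`, the element `e` forces `x`, `c` and `c₁`.
  obtain ⟨x, hx⟩ := hB
  obtain ⟨hxU, hxt, c, e, h⟩ := mem_ambiguousPartners.1 hx
  obtain ⟨hcx, he, hxu⟩ := huniq x hx c e h
  have hc := h.left_mem_ambiguousPartners hx
  have hcrep := h.swap hxU hxt
  obtain ⟨heU, het, c₁, e₁, h₁⟩ := mem_ambiguousPartners.1 he
  have hc₁ := h₁.left_mem_ambiguousPartners he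
  have hc₁rep := h₁.swap heU het
  have hxc₁ : x ≠ c₁ := by
    rintro rfl
    exact h.left_ne_right hxt (hxu e e₁ hc₁rep).1.symm
  have hcc₁ : c ≠ c₁ := by
    rintro rfl
    exact h.right_ne ((huniq c hc x e hcrep).2.2 e e₁ hc₁rep).1
  have hsub : ({x, c, c₁} : Finset G) ⊆
      (ambiguousPartners U t).bipartiteAbove (Forces U t) e := by
    intro y hy
    simp only [mem_insert, mem_singleton] at hy
    rcases hy with rfl | rfl | rfl
    · exact (mem_bipartiteAbove _).2 ⟨hx, (forces _ hx _ _ h).2⟩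
    · exact (mem_bipartiteAbove _).2 ⟨hc, (forces _ hc _ _ hcrep).2⟩
    · exact (mem_bipartiteAbove _).2 ⟨hc₁, (forces _ hc₁ _ _ hc₁rep).1⟩
  refine ⟨e, he, ?_⟩
  calc 2 < #({x, c, c₁} : Finset G) := by
        rw [card_eq_three.2 ⟨x, c, c₁, hcx.symm, hxc₁, hcc₁, rfl⟩]; norm_num
    _ ≤ _ := card_le_card hsub

lemma exists_card_bipartiteAbove_forces_le_one [IsAddTorsionFree G]
    (hB : (ambiguousPartners U t).Nonempty) :
    ∃ p ∈ ambiguousPartners U t,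
      #((ambiguousPartners U t).bipartiteAbove (Forces U t) p) ≤ 1 := by
  set B := ambiguousPartners U t
  -- Otherwise the double count `∑ₚ #above p = ∑ₓ #below x` with `#below ≤ 2 ≤ #above` is tight.
  by_contra! hlarge
  have hcount := sum_card_bipartiteAbove_eq_sum_card_bipartiteBelow (s := B) (t := B)
    (r := Forces U t)
  have hbelow_le : ∀ x ∈ B, #(B.bipartiteBelow (Forces U t) x) ≤ 2 :=
    fun x hx => card_bipartiteBelow_forces_le_two hx
  have hsum : ∑ x ∈ B, #(B.bipartiteBelow (Forces U t) x) = ∑ _x ∈ B, 2 :=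
    le_antisymm (sum_le_sum hbelow_le) (hcount ▸ sum_le_sum hlarge)
  have hbelow := (sum_eq_sum_iff_of_le hbelow_le).1 hsum
  have habove := (sum_eq_sum_iff_of_le hlarge).1 (hsum.symm.trans hcount.symm)
  obtain ⟨p, hp, h3⟩ := exists_two_lt_card_bipartiteAbove_forces hB
    fun x hx c e h => h.unique_of_card_bipartiteBelow_forces_eq_two hx (hbelow x hx)
  exact absurd (habove p hp) h3.ne

lemma ambiguousPartners_subset_insert (p : G) :
    ambiguousPartners U t ⊆ insert p ((ambiguousPartners U t).bipartiteAbove (Forces U t) p ∪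
      ambiguousPartners (U.erase p) t) := by
  intro x hx
  obtain ⟨hxU, hxt, -⟩ := mem_ambiguousPartners.1 hx
  rw [mem_insert, mem_union, mem_bipartiteAbove]
  by_cases hxp : x = p
  · exact Or.inl hxp
  by_cases hforced : ∀ c e, IsOtherSubRep U t x c e → p = c ∨ p = e
  · exact Or.inr (Or.inl ⟨hx, Ne.symm hxp, hforced⟩)
  push Not at hforced
  obtain ⟨c, e, h, hpc, hpe⟩ := hforced
  refine Or.inr (Or.inr (mem_ambiguousPartners.2 ⟨mem_erase.2 ⟨hxp, hxU⟩, hxt, c, e, ?_⟩))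
  exact ⟨mem_erase.2 ⟨Ne.symm hpc, h.1⟩, mem_erase.2 ⟨Ne.symm hpe, h.2.1⟩, h.2.2⟩

end UniqueSub

section Claim

open scoped Classical

variable {k V : Type*} [Field k] [CharZero k] [AddCommGroup V] [Module k V] {U : Finset V}
  {t p : V}

/-- `t - p = c - e` writes `p` as `t - c + e`, or as the midpoint of `t` and `e` when `c = p`. -/
lemma mem_affineSpan_erase_of_mem_ambiguousPartners (ht : t ∈ U)
    (hp : p ∈ ambiguousPartners U t) : p ∈ affineSpan k ((U.erase p : Finset V) : Set V) := by
  obtain ⟨-, hpt, c, e, hcU, heU, heq, hct⟩ := mem_ambiguousPartners.1 hp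
  have mem : ∀ y ∈ U, y ≠ p → y ∈ affineSpan k ((U.erase p : Finset V) : Set V) :=
    fun y hy hyp => subset_affineSpan k _ (mem_erase.2 ⟨hyp, hy⟩)
  have hep : e ≠ p := IsOtherSubRep.right_ne ⟨hcU, heU, heq, hct⟩
  by_cases hcp : c = p
  · rw [hcp] at heq
    have hmid : p = (2⁻¹ : k) • (e -ᵥ t) +ᵥ t := by
      rw [vsub_eq_sub, vadd_eq_add]
      linear_combination (norm := module) (2⁻¹ : k) • heq
    have := AffineSubspace.vadd_mem_of_mem_direction (Submodule.smul_mem _ (2⁻¹ : k)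
      (AffineSubspace.vsub_mem_direction (mem e heU hep) (mem t ht hpt.symm)))
      (mem t ht hpt.symm)
    rwa [← hmid] at this
  · have hsum : p = (t -ᵥ c) +ᵥ e := by
      rw [vsub_eq_sub, vadd_eq_add]
      linear_combination (norm := module) heq
    have := AffineSubspace.vadd_mem_of_mem_direction
      (AffineSubspace.vsub_mem_direction (mem t ht hpt.symm) (mem c hcU hcp)) (mem e heU hep)
    rwa [← hsum] at this

lemma vectorSpan_erase_of_mem_ambiguousPartners (ht : t ∈ U) (hp : p ∈ ambiguousPartners U t) :
    vectorSpan k ((U.erase p : Finset V) : Set V) = vectorSpan k (U : Set V) := by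
  rw [← vectorSpan_insert_eq_vectorSpan (mem_affineSpan_erase_of_mem_ambiguousPartners ht hp),
    ← coe_insert, insert_erase (mem_ambiguousPartners.1 hp).1]

variable (k) in
theorem card_ambiguousPartners_add_two_mul_finrank_le (ht : t ∈ U) :
    #(ambiguousPartners U t) + 2 * Module.finrank k (vectorSpan k (U : Set V)) + 2 ≤ 2 * #U := by
  have := IsAddTorsionFree.of_isTorsionFree k V
  induction U using Finset.strongInduction with
  | H U ih =>
  rcases (ambiguousPartners U t).eq_empty_or_nonempty with hB | hB
  · have hU : #U = (#U - 1) + 1 := (Nat.sub_add_cancel (card_pos.2 ⟨t, ht⟩)).symm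
    have := finrank_vectorSpan_image_finset_le k id U hU
    rw [image_id] at this
    rw [hB, card_empty]
    omega
  obtain ⟨p, hp, hp1⟩ := exists_card_bipartiteAbove_forces_le_one hB
  obtain ⟨hpU, hpt, -⟩ := mem_ambiguousPartners.1 hp
  have hIH := ih (U.erase p) (erase_ssubset hpU) (mem_erase.2 ⟨hpt.symm, ht⟩)
  rw [vectorSpan_erase_of_mem_ambiguousPartners ht hp, card_erase_of_mem hpU] at hIH
  have hsub := card_le_card (ambiguousPartners_subset_insert (U := U) (t := t) p)
  have := card_insert_le p ((ambiguousPartners U t).bipartiteAbove (Forces U t) p ∪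
    ambiguousPartners (U.erase p) t)
  have := card_union_le ((ambiguousPartners U t).bipartiteAbove (Forces U t) p)
    (ambiguousPartners (U.erase p) t)
  have := card_pos.2 ⟨t, ht⟩
  omega

variable (k) in
theorem two_mul_finrank_add_one_le_card_uniquePartners_add_card (ht : t ∈ U) :
    2 * Module.finrank k (vectorSpan k (U : Set V)) + 1 ≤ #(uniquePartners U t) + #U := by
  have hsplit : #(uniquePartners U t) + #(ambiguousPartners U t) = #U - 1 := by
    rw [uniquePartners, ambiguousPartners, card_filter_add_card_filter_not,
      card_erase_of_mem ht]
  have := card_ambiguousPartners_add_two_mul_finrank_le k ht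
  omega

end Claim

lemma cauchy_davenport_sub_of_isAddTorsionFree {G : Type*} [AddCommGroup G] [DecidableEq G]
    [IsAddTorsionFree G] {s t : Finset G} (hs : s.Nonempty) (ht : t.Nonempty) :
    #s + #t - 1 ≤ #(s - t) := by
  simpa only [sub_eq_add_neg, card_neg] using cauchy_davenport_of_isAddTorsionFree hs ht.neg

section Fibres

variable {V W : Type*} [AddCommGroup V] [AddCommGroup W] [DecidableEq V] [DecidableEq W]
  (ψ : V →+ W) (Z : Finset V)

/-- The sets `Zₐ - Z_b` are disjoint for distinct pairs since `ψ` maps them to the distinct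
values `a - b`. -/
lemma sum_card_fiber_sub_fiber_le :
    ∑ a ∈ Z.image ψ, ∑ b ∈ uniquePartners (Z.image ψ) a,
      #({z ∈ Z | ψ z = a} - {z ∈ Z | ψ z = b}) ≤ #{w ∈ Z - Z | ψ w ≠ 0} := by
  set F : (Σ _ : W, W) → Finset V := fun ab => {z ∈ Z | ψ z = ab.1} - {z ∈ Z | ψ z = ab.2}
  have hF : ∀ ab, ∀ w ∈ F ab, w ∈ Z - Z ∧ ψ w = ab.1 - ab.2 := by
    intro ab w hw
    obtain ⟨y, hy, z, hz, rfl⟩ := mem_sub.1 hw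
    rw [mem_filter] at hy hz
    exact ⟨sub_mem_sub hy.1 hz.1, by rw [map_sub, hy.2, hz.2]⟩
  rw [← sum_sigma (f := fun ab => #(F ab)), ← card_biUnion]
  · refine card_le_card fun w hw => ?_
    obtain ⟨⟨a, b⟩, hab, hw⟩ := mem_biUnion.1 hw
    obtain ⟨hwZ, hψw⟩ := hF _ w hw
    have hba := (mem_uniquePartners.1 (mem_sigma.1 hab).2).2.1
    exact mem_filter.2 ⟨hwZ, by rw [hψw]; exact sub_ne_zero.2 hba.symm⟩
  · rintro ⟨a, b⟩ hab ⟨a', b'⟩ hab' hne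
    refine disjoint_left.2 fun w hw hw' => hne ?_
    obtain ⟨ha', hb'⟩ := mem_sigma.1 hab'
    have := (mem_uniquePartners.1 (mem_sigma.1 hab).2).2.2 a' ha' b'
      (uniquePartners_subset hb') ((hF _ w hw').2.symm.trans (hF _ w hw).2)
    rw [this.1, this.2]

end Fibres

section Counting

variable (k : Type*) {V W : Type*} [Field k] [CharZero k] [AddCommGroup V] [IsAddTorsionFree V]
  [DecidableEq V] [AddCommGroup W] [Module k W] [DecidableEq W]

theorem two_mul_card_mul_le_card_sub_filter_add_sq (ψ : V →+ W) (Z : Finset V) :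
    2 * (2 * (Module.finrank k (vectorSpan k (Z.image ψ : Set W)) : ℤ) + 1 - #(Z.image ψ)) * #Z ≤
      #{w ∈ Z - Z | ψ w ≠ 0} + #(Z.image ψ) ^ 2 := by
  set U := Z.image ψ
  set u := Module.finrank k (vectorSpan k (U : Set W))
  set g : W → ℕ := fun a => #(uniquePartners U a)
  set z : W → ℕ := fun a => #{x ∈ Z | ψ x = a}
  have hZ : ∑ a ∈ U, z a = #Z := (card_eq_sum_card_image ψ Z).symm
  have hg : ∀ a ∈ U, 2 * u + 1 ≤ g a + #U := fun a ha =>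
    two_mul_finrank_add_one_le_card_uniquePartners_add_card k ha
  have hgU : ∑ a ∈ U, g a ≤ #U ^ 2 := calc
    ∑ a ∈ U, g a ≤ ∑ _a ∈ U, #U :=
      sum_le_sum fun a _ => card_le_card uniquePartners_subset
    _ = #U ^ 2 := by rw [sum_const, smul_eq_mul, sq]
  have hfiber : ∀ a ∈ U, ∀ b ∈ uniquePartners U a,
      z a + z b ≤ #({x ∈ Z | ψ x = a} - {x ∈ Z | ψ x = b}) + 1 := by
    intro a ha b hb
    have fiber_nonempty : ∀ c ∈ U, ({x ∈ Z | ψ x = c} : Finset V).Nonempty := by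
      intro c hc
      obtain ⟨x, hx, rfl⟩ := mem_image.1 hc
      exact ⟨x, mem_filter.2 ⟨hx, rfl⟩⟩
    have := cauchy_davenport_sub_of_isAddTorsionFree (fiber_nonempty a ha)
      (fiber_nonempty b (uniquePartners_subset hb))
    simp only [z]
    omega
  have hpairs : 2 * ∑ a ∈ U, g a * z a ≤ #{w ∈ Z - Z | ψ w ≠ 0} + ∑ a ∈ U, g a := calc
    2 * ∑ a ∈ U, g a * z a = ∑ a ∈ U, ∑ b ∈ uniquePartners U a, (z a + z b) := by
      simp only [sum_add_distrib, sum_sum_uniquePartners_eq, sum_const, smul_eq_mul, g]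
      ring
    _ ≤ ∑ a ∈ U, ∑ b ∈ uniquePartners U a,
          (#({x ∈ Z | ψ x = a} - {x ∈ Z | ψ x = b}) + 1) :=
      sum_le_sum fun a ha => sum_le_sum fun b hb => hfiber a ha b hb
    _ ≤ #{w ∈ Z - Z | ψ w ≠ 0} + ∑ a ∈ U, g a := by
      simp only [sum_add_distrib, sum_const, smul_eq_mul, mul_one]
      exact Nat.add_le_add_right (sum_card_fiber_sub_fiber_le ψ Z) _
  have hlow : (2 * (u : ℤ) + 1 - #U) * #Z ≤ ∑ a ∈ U, (g a * z a : ℤ) := by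
    rw [← hZ, Nat.cast_sum, mul_sum]
    exact sum_le_sum fun a ha =>
      mul_le_mul_of_nonneg_right (by have := hg a ha; omega) (Nat.cast_nonneg _)
  have hpairs' : (2 * ∑ a ∈ U, g a * z a : ℕ) ≤ (#{w ∈ Z - Z | ψ w ≠ 0} + #U ^ 2 : ℤ) := by
    exact_mod_cast hpairs.trans (Nat.add_le_add_left hgU _)
  push_cast at hpairs'
  linarith

end Counting

theorem stmt_9_general {d m u : ℕ}
    (R : Submodule ℝ (Fin d → ℝ))
    (Z : Finset (Fin d → ℝ))
    (hcosets : ((R.mkQ) '' (Z : Set (Fin d → ℝ))).ncard = m)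
    (hu : Module.finrank ℝ
        (affineSpan ℝ ((R.mkQ) '' (Z : Set (Fin d → ℝ)))).direction = u) :
    ((((Z : Set (Fin d → ℝ)) - (Z : Set (Fin d → ℝ))) \ (R : Set (Fin d → ℝ))).ncard : ℤ)
      ≥ 2 * (2 * (u : ℤ) + 1 - m) * Z.card - 16 * ((u : ℤ) ^ 2 + m ^ 2) := by
  classical
  have key := two_mul_card_mul_le_card_sub_filter_add_sq ℝ R.mkQ.toAddMonoidHom Z
  have hψ : Z.image R.mkQ.toAddMonoidHom = Z.image R.mkQ := rfl
  rw [← coe_image, Set.ncard_coe_finset] at hcosets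
  rw [← coe_image, direction_affineSpan] at hu
  have hdiff : ((Z : Set (Fin d → ℝ)) - Z) \ R =
      ({w ∈ Z - Z | R.mkQ.toAddMonoidHom w ≠ 0} : Finset _) := by
    ext w
    simp only [coe_filter, ← coe_sub, LinearMap.toAddMonoidHom_coe, Submodule.mkQ_apply, ne_eq,
      Submodule.Quotient.mk_eq_zero]
    rfl
  rw [hdiff, Set.ncard_coe_finset]
  rw [hψ, hcosets, hu] at key
  linarith [sq_nonneg (u : ℤ), sq_nonneg (m : ℤ)]

theorem stmt_9 {d m u : ℕ} (hd : 4 ≤ d) (hm : 2 ≤ m)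
    (R : Submodule ℝ (Fin d → ℝ))
    (hR1 : 1 ≤ Module.finrank ℝ R) (hR2 : Module.finrank ℝ R ≤ d - 1)
    (Z : Finset (Fin d → ℝ)) (hZ : Z.Nonempty)
    (hcosets : ((R.mkQ) '' (Z : Set (Fin d → ℝ))).ncard = m)
    (hu : Module.finrank ℝ
        (affineSpan ℝ ((R.mkQ) '' (Z : Set (Fin d → ℝ)))).direction = u)
    (hum : u + 1 ≤ m) (hmu : m ≤ 2 * u) :
    ((((Z : Set (Fin d → ℝ)) - (Z : Set (Fin d → ℝ))) \ (R : Set (Fin d → ℝ))).ncard : ℤ)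
      ≥ 2 * (2 * (u : ℤ) + 1 - m) * Z.card - 16 * ((u : ℤ) ^ 2 + m ^ 2) :=
  stmt_9_general R Z hcosets hu
end

section
/- Let S ⊆ ℝ^d be finite nonempty and let a₁,…,a_k ∈ ℝ^d be points such that each a_i lies outside the affine span of S and dim(S ∪ {a₁,…,a_k}) = dim(S) + k. Then the sets S-S, S-a₁,…,S-a_k, a₁-S,…,a_k-S are pairwise disjoint. -/
open Pointwise

set_option maxHeartbeats 1000000 in
set_option synthInstance.maxHeartbeats 400000 in
theorem stmt_11 {d k : ℕ} (S : Finset (Fin d → ℝ)) (hS : S.Nonempty)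
    (a : Fin k → (Fin d → ℝ))
    (ha : ∀ i, a i ∉ affineSpan ℝ (S : Set (Fin d → ℝ)))
    (hdim : Module.finrank ℝ
        (affineSpan ℝ ((S : Set (Fin d → ℝ)) ∪ Set.range a)).direction
      = Module.finrank ℝ (affineSpan ℝ (S : Set (Fin d → ℝ))).direction + k) :
    Pairwise (Function.onFun Disjoint
      (fun x : Unit ⊕ (Fin k × Bool) =>
        match x with
        | Sum.inl _ => (S : Set (Fin d → ℝ)) - (S : Set (Fin d → ℝ))
        | Sum.inr (i, true) => (S : Set (Fin d → ℝ)) - {a i}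
        | Sum.inr (i, false) => {a i} - (S : Set (Fin d → ℝ)))) := by
  classical
  obtain ⟨p, hp⟩ := hS
  have hpS : p ∈ (S : Set (Fin d → ℝ)) := hp
  set V := (affineSpan ℝ (S : Set (Fin d → ℝ))).direction with hVdef
  set qv := V.mkQ with hqdef
  set f : Fin k → ((Fin d → ℝ) ⧸ V) := fun i => qv (a i - p) with hfdef
  have hmemV : ∀ s ∈ (S : Set (Fin d → ℝ)), s - p ∈ V := fun s hs => by
    have := AffineSubspace.vsub_mem_direction (subset_affineSpan ℝ _ hs)
      (subset_affineSpan ℝ _ hpS)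
    simpa [vsub_eq_sub] using this
  have hqS : ∀ s ∈ (S : Set (Fin d → ℝ)), qv (s - p) = 0 := fun s hs =>
    (Submodule.Quotient.mk_eq_zero V).2 (hmemV s hs)
  -- direction of big span
  set T := (affineSpan ℝ ((S : Set (Fin d → ℝ)) ∪ Set.range a)).direction with hTdef
  have hT : T = V ⊔ Submodule.span ℝ (Set.range fun i => a i - p) := by
    rw [hTdef, direction_affineSpan,
        vectorSpan_eq_span_vsub_set_right ℝ (Set.mem_union_left _ hpS),
        Set.image_union, Submodule.span_union]
    congr 1
    · rw [← vectorSpan_eq_span_vsub_set_right ℝ hpS, hVdef,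
        direction_affineSpan]
    · rw [← Set.range_comp]
      rfl
  have hVle : V ≤ T := by
    rw [hVdef, hTdef]
    exact AffineSubspace.direction_le (affineSpan_mono ℝ Set.subset_union_left)
  -- rank computation
  have hrank : Module.finrank ℝ (T.map qv) = k := by
    have h1 := LinearMap.finrank_range_add_finrank_ker (qv ∘ₗ T.subtype)
    have h2 : LinearMap.range (qv ∘ₗ T.subtype) = T.map qv := by
      rw [LinearMap.range_comp, Submodule.range_subtype]
    have h3 : LinearMap.ker (qv ∘ₗ T.subtype) = V.comap T.subtype := by
      rw [LinearMap.ker_comp, hqdef, Submodule.ker_mkQ]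
    have h4 : Module.finrank ℝ (V.comap T.subtype) = Module.finrank ℝ V :=
      (Submodule.comapSubtypeEquivOfLe hVle).finrank_eq
    rw [h2, h3, h4] at h1
    have h5 : Module.finrank ℝ T = Module.finrank ℝ V + k := hdim
    omega
  have hspan : Submodule.span ℝ (Set.range f) = T.map qv := by
    rw [hT, Submodule.map_sup, Submodule.map_span, ← Set.range_comp]
    have hVbot : V.map qv = ⊥ := by
      rw [hqdef]
      exact Submodule.mkQ_map_self V
    rw [hVbot, bot_sup_eq]
    rfl
  have hfi : LinearIndependent ℝ f := by
    rw [linearIndependent_iff_card_eq_finrank_span]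
    rw [Fintype.card_fin]
    show k = Module.finrank ℝ (Submodule.span ℝ (Set.range f))
    rw [hspan, hrank]
  have nz : ∀ i, f i ≠ 0 := fun i => hfi.ne_zero i
  have inj : Function.Injective f := hfi.injective
  have key : ∀ i j : Fin k, f i + f j ≠ 0 := by
    intro i j h
    have hsum : ∑ x, ((fun x => (if x = i then (1:ℝ) else 0) + (if x = j then 1 else 0)) x) • f x = 0 := by
      simp only [add_smul, ite_smul, one_smul, zero_smul, Finset.sum_add_distrib,
        Finset.sum_ite_eq', Finset.mem_univ, if_true]
      exact h
    have := Fintype.linearIndependent_iff.1 hfi _ hsum i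
    simp only [if_pos rfl] at this
    by_cases hij : i = j <;> simp [hij] at this
  -- value computation
  have hval : ∀ (x : Unit ⊕ (Fin k × Bool)) (z : Fin d → ℝ),
      z ∈ (match x with
        | Sum.inl _ => (S : Set (Fin d → ℝ)) - (S : Set (Fin d → ℝ))
        | Sum.inr (i, true) => (S : Set (Fin d → ℝ)) - {a i}
        | Sum.inr (i, false) => {a i} - (S : Set (Fin d → ℝ))) →
      qv z = (match x with
        | Sum.inl _ => 0
        | Sum.inr (i, true) => -f i
        | Sum.inr (i, false) => f i) := by
    rintro (u | ⟨i, b⟩) z hz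
    · obtain ⟨s, hs, t, ht, rfl⟩ := hz
      show qv (s - t) = 0
      have he : s - t = (s - p) - (t - p) := (sub_sub_sub_cancel_right s t p).symm
      rw [he, map_sub, hqS s hs, hqS t ht, sub_zero]
    · cases b
      · obtain ⟨t, rfl, s, hs, rfl⟩ := hz
        show qv (a i - s) = f i
        have he : a i - s = (a i - p) - (s - p) := (sub_sub_sub_cancel_right _ _ p).symm
        rw [he, map_sub, hqS s hs, sub_zero]
      · obtain ⟨s, hs, t, rfl, rfl⟩ := hz
        show qv (s - a i) = -f i
        have he : s - a i = (s - p) - (a i - p) := (sub_sub_sub_cancel_right _ _ p).symm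
        rw [he, map_sub, hqS s hs, zero_sub]
  intro x y hxy
  rw [Function.onFun, Set.disjoint_left]
  intro z hz hz'
  have h1 := hval x z hz
  have h2 := hval y z hz'
  rw [h1] at h2
  match x, y, hxy, h2 with
  | Sum.inl u, Sum.inl u', hxy, _ => exact hxy (by cases u; cases u'; rfl)
  | Sum.inl u, Sum.inr (i, true), _, h2 => exact nz i (neg_eq_zero.mp h2.symm)
  | Sum.inl u, Sum.inr (i, false), _, h2 => exact nz i h2.symm
  | Sum.inr (i, true), Sum.inl u, _, h2 => exact nz i (neg_eq_zero.mp h2)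
  | Sum.inr (i, false), Sum.inl u, _, h2 => exact nz i h2
  | Sum.inr (i, true), Sum.inr (j, true), hxy, h2 =>
      exact hxy (by rw [inj (neg_injective h2)])
  | Sum.inr (i, false), Sum.inr (j, false), hxy, h2 =>
      exact hxy (by rw [inj h2])
  | Sum.inr (i, true), Sum.inr (j, false), _, h2 =>
      have h2' : -f i = f j := h2
      exact key j i (by rw [← h2', neg_add_cancel])
  | Sum.inr (i, false), Sum.inr (j, true), _, h2 =>
      have h2' : f i = -f j := h2
      exact key i j (by rw [h2', neg_add_cancel])
end

section
/- Let X ⊆ ℝ^{d-1} be a finite set with dim(X) = d-1, let H₁ be the affine span of a (d-2)-dimensional facet of the convex hull of X, and let H₂ be the translate of H₁ meeting X that is farthest from H₁ (in the direction orthogonal to H₁). Set X₁ = H₁ ∩ X, X₂ = H₂ ∩ X, Y₂ = X \ X₂. Then the sets X₂ - X₁, X₁ - X₂, and Y₂ - Y₂ are pairwise disjoint. -/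
open Pointwise

/-- The supporting hyperplane `H₁ = {f = c₁}` contains a facet of the convex hull of `X`
(in particular it supports `X`), and `H₂ = {f = c₂}` is the farthest parallel translate
meeting `X`; then `X₂ - X₁`, `X₁ - X₂`, `Y₂ - Y₂` are pairwise disjoint. -/
theorem stmt_13 {d : ℕ} (X : Finset (Fin (d - 1) → ℝ))
    (hdimX : Module.finrank ℝ (affineSpan ℝ (X : Set (Fin (d - 1) → ℝ))).direction = d - 1)
    (f : (Fin (d - 1) → ℝ) →ₗ[ℝ] ℝ) (hf : f ≠ 0) (c₁ c₂ : ℝ) (hc : c₁ < c₂)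
    (H₁ H₂ : Set (Fin (d - 1) → ℝ))
    (hH₁ : H₁ = {x | f x = c₁}) (hH₂ : H₂ = {x | f x = c₂})
    -- H₁ supports X (it is the affine span of a (d-2)-dimensional facet of the hull of X):
    (hsupp : ∀ x ∈ X, c₁ ≤ f x)
    (hfacet : Module.finrank ℝ
        (affineSpan ℝ ((X : Set (Fin (d - 1) → ℝ)) ∩ H₁)).direction = d - 2)
    -- H₂ is the farthest translate of H₁ meeting X:
    (hslab : ∀ x ∈ X, f x ≤ c₂)
    (hmeet : ∃ x ∈ X, f x = c₂)
    (X₁ X₂ Y₂ : Finset (Fin (d - 1) → ℝ))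
    (hX₁ : (X₁ : Set (Fin (d - 1) → ℝ)) = (X : Set (Fin (d - 1) → ℝ)) ∩ H₁)
    (hX₂ : (X₂ : Set (Fin (d - 1) → ℝ)) = (X : Set (Fin (d - 1) → ℝ)) ∩ H₂)
    (hY₂ : Y₂ = X \ X₂) :
    Disjoint ((X₂ : Set (Fin (d - 1) → ℝ)) - (X₁ : Set (Fin (d - 1) → ℝ)))
        ((X₁ : Set (Fin (d - 1) → ℝ)) - (X₂ : Set (Fin (d - 1) → ℝ))) ∧
    Disjoint ((X₂ : Set (Fin (d - 1) → ℝ)) - (X₁ : Set (Fin (d - 1) → ℝ)))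
        ((Y₂ : Set (Fin (d - 1) → ℝ)) - (Y₂ : Set (Fin (d - 1) → ℝ))) ∧
    Disjoint ((X₁ : Set (Fin (d - 1) → ℝ)) - (X₂ : Set (Fin (d - 1) → ℝ)))
        ((Y₂ : Set (Fin (d - 1) → ℝ)) - (Y₂ : Set (Fin (d - 1) → ℝ))) := by

  have hf2 : ∀ z ∈ (X₂ : Set (Fin (d - 1) → ℝ)) - (X₁ : Set (Fin (d - 1) → ℝ)),
      f z = c₂ - c₁ := by
    rintro z ⟨a, ha, b, hb, rfl⟩
    rw [hX₂, hH₂] at ha; rw [hX₁, hH₁] at hb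
    simp only [map_sub]; rw [show f a = c₂ from ha.2, show f b = c₁ from hb.2]
  have hf1 : ∀ z ∈ (X₁ : Set (Fin (d - 1) → ℝ)) - (X₂ : Set (Fin (d - 1) → ℝ)),
      f z = c₁ - c₂ := by
    rintro z ⟨a, ha, b, hb, rfl⟩
    rw [hX₁, hH₁] at ha; rw [hX₂, hH₂] at hb
    simp only [map_sub]; rw [show f a = c₁ from ha.2, show f b = c₂ from hb.2]
  have hfY : ∀ z ∈ (Y₂ : Set (Fin (d - 1) → ℝ)) - (Y₂ : Set (Fin (d - 1) → ℝ)),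
      c₁ - c₂ < f z ∧ f z < c₂ - c₁ := by
    rintro z ⟨a, ha, b, hb, rfl⟩
    rw [hY₂] at ha hb
    simp only [Finset.coe_sdiff, Set.mem_diff, Finset.mem_coe] at ha hb
    have haX := ha.1
    have hbX := hb.1
    have ha2 : f a < c₂ := lt_of_le_of_ne (hslab a haX) (by
      intro h
      exact ha.2 (by
        have : (a : Fin (d-1) → ℝ) ∈ (X₂ : Set (Fin (d-1) → ℝ)) := by
          rw [hX₂, hH₂]; exact ⟨haX, h⟩
        exact_mod_cast this))
    have hb2 : f b < c₂ := lt_of_le_of_ne (hslab b hbX) (by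
      intro h
      exact hb.2 (by
        have : (b : Fin (d-1) → ℝ) ∈ (X₂ : Set (Fin (d-1) → ℝ)) := by
          rw [hX₂, hH₂]; exact ⟨hbX, h⟩
        exact_mod_cast this))
    have ha1 := hsupp a haX
    have hb1 := hsupp b hbX
    constructor <;> simp only [map_sub] <;> linarith
  refine ⟨?_, ?_, ?_⟩
  · rw [Set.disjoint_left]
    intro z h1 h2
    have := hf2 z h1; have := hf1 z h2; linarith
  · rw [Set.disjoint_left]
    intro z h1 h2
    have := hf2 z h1; have := (hfY z h2).2; linarith
  · rw [Set.disjoint_left]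
    intro z h1 h2
    have := hf1 z h1; have := (hfY z h2).1; linarith
end

section
/- Let d ≥ 3 and for each natural number i define T = {e₀, e₁, …, e_{d-2}} ⊆ ℤ^d (where e₀ = 0 and e₁,…,e_d is the standard basis), a_i = e_d - i·e_{d-1}, p_i = {0, e_{d-1}, 2e_{d-1}, …, (i-1)e_{d-1}}, and A_i = (T ∪ (a_i - T)) + p_i. Then |A_i| = (2d-2)·i and dim(A_i) = d for i ≥ 2. -/
/-!
The `e_d`-coordinate vanishes on `T` and equals `1` on `a - T`, so `S = T ∪ (a - T)` has
`2(d - 1)` points. The `e_{d-1}`-coordinate of every point of `S` is `0` or `-i`, a multiple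
of `i`; hence in `s + k e_{d-1}` with `0 ≤ k < i` the shift `k` is the residue mod `i` of that
coordinate, and `S + p` has `|S| i` points. For the dimension, `A` contains `0`, the `e_j` with
`j ≤ d - 2`, `e_{d-1}` (as `i ≥ 2`), and `a + (i - 1) e_{d-1} = e_d - e_{d-1}`.
-/

open Finset Pointwise

theorem eq_of_mul_add_eq_mul_add {n k l : ℕ} (hk : k < n) (hl : l < n) {m m' : ℤ}
    (h : m * n + k = m' * n + l) : k = l := by
  have := congrArg (· % (n : ℤ)) h
  simp only [Int.mul_add_emod_self_right] at this
  rwa [Int.emod_eq_of_lt (by omega) (by omega), Int.emod_eq_of_lt (by omega) (by omega),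
    Nat.cast_inj] at this

theorem card_add_image_range_smul {K V : Type*} [Ring K] [CharZero K] [AddCommGroup V]
    [Module K V] [DecidableEq V] {S : Finset V} {f : V →ₗ[K] K} {u : V} (hu : f u = 1) {n : ℕ}
    (hS : ∀ x ∈ S, ∃ m : ℤ, f x = m * n) :
    #(S + (range n).image (fun k : ℕ => (k : K) • u)) = #S * n := by
  have hinj : Function.Injective (fun k : ℕ => (k : K) • u) := fun k l h => by
    simpa [hu] using congrArg f h
  rw [card_add_iff.mpr, card_image_of_injective _ hinj, card_range]
  rintro ⟨x, _⟩ ⟨hx, hkP⟩ ⟨y, _⟩ ⟨hy, hlP⟩ h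
  obtain ⟨k, hk, rfl⟩ := mem_image.mp hkP
  obtain ⟨l, hl, rfl⟩ := mem_image.mp hlP
  obtain ⟨m, hm⟩ := hS x hx
  obtain ⟨m', hm'⟩ := hS y hy
  have hkl : k = l := by
    refine eq_of_mul_add_eq_mul_add (mem_range.mp hk) (mem_range.mp hl) (m := m) (m' := m') ?_
    have := congrArg f h
    simp only [map_add, map_smul, hu, smul_eq_mul, mul_one, hm, hm'] at this
    exact_mod_cast this
  subst hkl
  simpa using h

namespace Finset

theorem card_singleton_sub {G : Type*} [AddGroup G] [DecidableEq G] (a : G) (T : Finset G) :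
    #({a} - T) = #T := by
  rw [singleton_sub, card_image_of_injective _ (sub_right_injective)]

theorem disjoint_singleton_sub {V G F : Type*} [AddGroup V] [AddGroup G] [FunLike F V G]
    [AddMonoidHomClass F V G] [DecidableEq V] {f : F} {T : Finset V} {a : V}
    (hT : ∀ t ∈ T, f t = 0) (ha : f a ≠ 0) : Disjoint T ({a} - T) := by
  rw [singleton_sub, disjoint_left]
  intro x hx hx'
  obtain ⟨t, ht, rfl⟩ := mem_image.mp hx'
  have := hT _ hx
  rw [map_sub, hT t ht, sub_zero] at this
  exact ha this

end Finset

section Construction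

variable {ι : Type*} [Fintype ι] [DecidableEq ι]

noncomputable def simplexVertices (s : Finset ι) : Finset (ι → ℝ) :=
  insert 0 (s.image (Pi.single · 1))

noncomputable def coordProgression (v : ι) (n : ℕ) : Finset (ι → ℝ) :=
  (range n).image fun k : ℕ => (k : ℝ) • Pi.single v 1

theorem card_simplexVertices (s : Finset ι) : #(simplexVertices s) = #s + 1 := by
  have hinj : Function.Injective (Pi.single · (1 : ℝ) : ι → ι → ℝ) := fun k l h =>
    (by simpa [Pi.single_apply] using congrFun h l : l = k).symm
  rw [simplexVertices, card_insert_of_notMem (by simp), card_image_of_injective _ hinj]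

theorem apply_eq_zero_of_mem_simplexVertices {s : Finset ι} {c : ι} (hc : c ∉ s) {t : ι → ℝ}
    (ht : t ∈ simplexVertices s) : t c = 0 := by
  simp only [simplexVertices, mem_insert, mem_image] at ht
  rcases ht with rfl | ⟨j, hj, rfl⟩
  · rfl
  · exact Pi.single_eq_of_ne (by rintro rfl; exact hc hj) 1

theorem card_union_singleton_sub_add_coordProgression {s : Finset ι} {v w : ι}
    (hv : v ∉ s) (hw : w ∉ s) {a : ι → ℝ} (haw : a w ≠ 0) {n : ℕ} (hav : ∃ m : ℤ, a v = m * n) :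
    #((simplexVertices s ∪ ({a} - simplexVertices s)) + coordProgression v n) =
      2 * (#s + 1) * n := by
  have hS : ∀ x ∈ simplexVertices s ∪ ({a} - simplexVertices s), ∃ m : ℤ, x v = m * n := by
    simp only [mem_union, singleton_sub, mem_image]
    rintro x (hx | ⟨t, ht, rfl⟩)
    · exact ⟨0, by simp [apply_eq_zero_of_mem_simplexVertices hv hx]⟩
    · simpa [apply_eq_zero_of_mem_simplexVertices hv ht] using hav
  rw [coordProgression, card_add_image_range_smul (f := LinearMap.proj (R := ℝ) v) (by simp) hS,
    card_union_of_disjoint (disjoint_singleton_sub (f := LinearMap.proj (R := ℝ) w)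
      (fun t ht => apply_eq_zero_of_mem_simplexVertices hw ht) haw),
    card_singleton_sub, card_simplexVertices]
  ring

theorem finrank_direction_affineSpan_eq_card {K : Type*} [Field K] {A : Set (ι → K)}
    (h0 : 0 ∈ A) (hA : ∀ j, Pi.single j 1 ∈ Submodule.span K A) :
    Module.finrank K (affineSpan K A).direction = Fintype.card ι := by
  have hspan : Submodule.span K A = ⊤ := eq_top_iff.mpr <|
    (Pi.basisFun K ι).span_eq.symm.le.trans <| Submodule.span_le.mpr <|
      Set.range_subset_iff.mpr (by simpa using hA)
  have hvec : vectorSpan K A = ⊤ := eq_top_iff.mpr <| hspan.ge.trans <|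
    Submodule.span_le.mpr fun x hx => by simpa using vsub_mem_vectorSpan K hx h0
  rw [direction_affineSpan, hvec, finrank_top, Module.finrank_fintype_fun_eq_card]

theorem finrank_direction_affineSpan_union_singleton_sub_add_coordProgression {s : Finset ι}
    {v w : ι} (hcover : ∀ j, j ∈ s ∨ j = v ∨ j = w) {a : ι → ℝ} {n : ℕ} (hn : 2 ≤ n)
    (ha : a + (n : ℝ) • Pi.single v 1 = Pi.single w 1) :
    Module.finrank ℝ (affineSpan ℝ (((simplexVertices s ∪ ({a} - simplexVertices s)) +
      coordProgression v n : Finset (ι → ℝ)) : Set (ι → ℝ))).direction = Fintype.card ι := by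
  set S := simplexVertices s ∪ ({a} - simplexVertices s)
  have hmem : ∀ x ∈ S, ∀ k < n, x + (k : ℝ) • Pi.single v 1 ∈ S + coordProgression v n :=
    fun x hx k hk => add_mem_add hx (mem_image_of_mem _ (mem_range.mpr hk))
  have h0 : (0 : ι → ℝ) ∈ simplexVertices s := mem_insert_self _ _
  have h0A := hmem 0 (mem_union_left _ h0) 0 (by omega)
  have hvA := hmem 0 (mem_union_left _ h0) 1 (by omega)
  have haA := hmem a (mem_union_right _ (by simpa using sub_mem_sub (mem_singleton_self a) h0))
    (n - 1) (by omega)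
  simp only [Nat.cast_zero, zero_smul, add_zero, Nat.cast_one, one_smul, zero_add] at h0A hvA
  refine finrank_direction_affineSpan_eq_card (mem_coe.mpr h0A) fun j => ?_
  rcases hcover j with hj | rfl | rfl
  · have hjA := hmem _ (mem_union_left _ (mem_insert_of_mem (mem_image_of_mem _ hj))) 0 (by omega)
    rw [Nat.cast_zero, zero_smul, add_zero] at hjA
    exact Submodule.subset_span hjA
  · exact Submodule.subset_span hvA
  · have hn' : (n : ℝ) = ((n - 1 : ℕ) : ℝ) + 1 := by
      rw [Nat.cast_sub (by omega), Nat.cast_one, sub_add_cancel]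
    rw [← ha, hn', add_smul, one_smul, ← add_assoc]
    exact add_mem (Submodule.subset_span haA) (Submodule.subset_span hvA)

end Construction

theorem stmt_17 {d : ℕ} (hd : 3 ≤ d) (i : ℕ) (hi : 2 ≤ i)
    (e : Fin d → (Fin d → ℝ)) (he : ∀ k, e k = Pi.single k 1)
    (T : Finset (Fin d → ℝ))
    (hT : T = insert 0 ((Finset.univ.filter (fun k : Fin d => (k : ℕ) < d - 2)).image e))
    (a : Fin d → ℝ)
    (ha : a = e ⟨d - 1, by omega⟩ - (i : ℝ) • e ⟨d - 2, by omega⟩)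
    (p : Finset (Fin d → ℝ))
    (hp : p = (Finset.range i).image (fun k : ℕ => (k : ℝ) • e ⟨d - 2, by omega⟩))
    (A : Finset (Fin d → ℝ))
    (hA : A = (T ∪ ({a} - T)) + p) :
    A.card = (2 * d - 2) * i ∧
    Module.finrank ℝ (affineSpan ℝ (A : Set (Fin d → ℝ))).direction = d := by
  obtain rfl : e = fun k => Pi.single k 1 := funext he
  set v : Fin d := ⟨d - 2, by omega⟩
  set w : Fin d := ⟨d - 1, by omega⟩
  set s := univ.filter fun k : Fin d => (k : ℕ) < d - 2
  replace hT : T = simplexVertices s := hT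
  replace hp : p = coordProgression v i := hp
  subst hT hp hA
  have hvw : v ≠ w := by simp [v, w, Fin.ext_iff]; omega
  refine ⟨?_, ?_⟩
  · rw [card_union_singleton_sub_add_coordProgression (v := v) (w := w) (by simp [s, v])
      (by simp [s, w]; omega) (by simp [ha, hvw.symm]) ⟨-1, by simp [ha, hvw]⟩,
      Fin.card_filter_val_lt]
    congr 1
    omega
  · refine (finrank_direction_affineSpan_union_singleton_sub_add_coordProgression
      (fun j => ?_) hi (by rw [ha]; abel)).trans (Fintype.card_fin d)
    simp only [s, v, w, mem_filter, mem_univ, true_and, Fin.ext_iff]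
    omega
end
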